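/- arXiv:2103.00770 — 3 statements merged into one kernel-verified Lean document; each statement's English description precedes it below -/
import Mathlib

section
/- Near-independence of parities: for a fixed integer b ≥ 1 and (log n)^2/n ≤ p ≤ 1 - (log n)^2/n, the probability that vertices 1,...,b all have odd degree in G(n,p) differs from the product of the individual probabilities by at most D/n^{q+1} for some constant D = D(b,q) and all sufficiently large n. -/
open MeasureTheory

/-- Bernoulli(p) measure on `Bool`. -/
noncomputable def bern (p : ℝ) : Measure Bool :=
  (Real.toNNReal p) • Measure.dirac true + (Real.toNNReal (1 - p)) • Measure.dirac false

instance (p : ℝ) : IsFiniteMeasure (bern p) := by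
  unfold bern; infer_instance

/-- The Erdős–Rényi measure: each potential edge (element of `Sym2 (Fin n)`)
is present (`true`) independently with probability `p`. -/
noncomputable def erMeasure (n : ℕ) (p : ℝ) : Measure (Sym2 (Fin n) → Bool) :=
  Measure.pi fun _ => bern p

/-- The random graph determined by the sample point `ω`. -/
def erGraph (n : ℕ) (ω : Sym2 (Fin n) → Bool) : SimpleGraph (Fin n) :=
  SimpleGraph.fromEdgeSet {e | ω e = true}

/-- Degree of a vertex. -/
noncomputable def degN {V : Type*} (G : SimpleGraph V) (v : V) : ℕ :=
  Nat.card (G.neighborSet v)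

/-- Number of odd-degree vertices. -/
noncomputable def oddCount (n : ℕ) (ω : Sym2 (Fin n) → Bool) : ℕ :=
  Nat.card {v : Fin n // Odd (degN (erGraph n ω) v)}

/-!
Write the indicator that `i` has odd degree as `(1 - (-1)^deg i)/2` and expand the product over
the first `b` vertices `B`: the joint probability becomes
`2^{-b} ∑_{t ⊆ B} (-1)^|t| E ∏_{i ∈ t} (-1)^deg i`. In that moment each edge inside `t` is counted
from both ends and drops out, so it is the expectation of the product of the independent signs of
the `|t|(n - |t|)` edges leaving `t`, namely `(1 - 2p)^{|t|(n - |t|)}`. The product of the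
marginals expands the same way with exponent `(n - 1)|t|`. The terms with `|t| ≤ 1` agree, and
for `2 ≤ |t| ≤ b ≤ n/2` both exponents are at least `n`, while
`|1 - 2p|^n ≤ exp(-2 log² n) ≤ n^{-(q+1)}` once `log n ≥ (q+1)/2`.
-/

open Finset

lemma ite_odd_eq_one_sub_neg_one_pow_div_two (d : ℕ) :
    (if Odd d then 1 else 0 : ℝ) = (1 - (-1) ^ d) / 2 := by
  rcases Nat.even_or_odd d with hd | hd
  · rw [if_neg (Nat.not_odd_iff_even.2 hd), hd.neg_one_pow]; norm_num
  · rw [if_pos hd, hd.neg_one_pow]; norm_num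

lemma prod_one_sub_div_two {ι R : Type*} [Field R] [DecidableEq ι] (B : Finset ι) (x : ι → R) :
    ∏ i ∈ B, (1 - x i) / 2 = (∑ t ∈ B.powerset, (-1) ^ #t * ∏ i ∈ t, x i) / 2 ^ #B := by
  rw [prod_div_distrib, prod_const, prod_sub]
  simp

section Bernoulli

variable {p : ℝ}

lemma integral_bern (hp0 : 0 ≤ p) (hp1 : p ≤ 1) (f : Bool → ℝ) :
    ∫ x, f x ∂bern p = p * f true + (1 - p) * f false := by
  rw [bern, integral_add_measure .of_finite .of_finite, integral_smul_nnreal_measure,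
    integral_smul_nnreal_measure, integral_dirac, integral_dirac, NNReal.smul_def,
    NNReal.smul_def, Real.coe_toNNReal _ hp0, Real.coe_toNNReal _ (sub_nonneg.2 hp1),
    smul_eq_mul, smul_eq_mul]

lemma integral_prod_bern {ι : Type*} [Fintype ι] [DecidableEq ι] (hp0 : 0 ≤ p) (hp1 : p ≤ 1)
    (F : Finset ι) (g : Bool → ℝ) :
    ∫ ω, ∏ e ∈ F, g (ω e) ∂Measure.pi (fun _ : ι => bern p)
      = (p * g true + (1 - p) * g false) ^ #F := by
  simp_rw [← Fintype.prod_ite_mem F]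
  rw [integral_fintype_prod_eq_prod (fun e x => if e ∈ F then g x else 1)]
  simp only [integral_bern hp0 hp1]
  rw [← prod_const, ← Fintype.prod_ite_mem F fun _ => p * g true + (1 - p) * g false]
  exact prod_congr rfl fun e _ => by split_ifs <;> ring

end Bernoulli

section ParityOfDegrees

variable {V : Type*} [Fintype V]

lemma degN_eq_card_filter_adj (G : SimpleGraph V) [DecidableRel G.Adj] (v : V) :
    degN G v = #{w | G.Adj v w} := by
  rw [degN, Nat.card_eq_fintype_card, G.card_neighborSet_eq_degree,
    ← G.card_neighborFinset_eq_degree, G.neighborFinset_eq_filter]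

variable [DecidableEq V]

lemma prod_neg_one_pow_degN {R : Type*} [CommRing R] (G : SimpleGraph V) [DecidableRel G.Adj]
    (S : Finset V) :
    ∏ v ∈ S, (-1 : R) ^ degN G v = ∏ x ∈ S ×ˢ Sᶜ, if G.Adj x.1 x.2 then -1 else 1 := by
  set a : V × V → R := fun x => if G.Adj x.1 x.2 then -1 else 1
  have hdeg (v : V) : (-1 : R) ^ degN G v = ∏ w, a (v, w) := by
    rw [degN_eq_card_filter_adj, ← prod_const, prod_filter]
  -- edges inside `S` are counted from both ends and cancel
  have hinside : ∏ x ∈ S ×ˢ S, a x = 1 := by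
    refine prod_involution (fun x _ => x.swap) (fun x _ => ?_) (fun x _ hx => ?_)
      (fun x hx => mem_product.2 (mem_product.1 hx).symm) (fun x _ => x.swap_swap)
    · simp only [a, Prod.fst_swap, Prod.snd_swap, G.adj_comm x.2]
      split_ifs <;> norm_num
    · have hadj : G.Adj x.1 x.2 := by by_contra h; exact hx (if_neg h)
      exact fun h => hadj.ne (congrArg Prod.snd h)
  simp_rw [hdeg, ← prod_mul_prod_compl S, prod_mul_distrib, ← prod_product, hinside, one_mul]

lemma injOn_uncurry_sym2Mk_product_compl (S : Finset V) :
    Set.InjOn Sym2.mk.uncurry (↑(S ×ˢ Sᶜ) : Set (V × V)) := by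
  rintro ⟨i, j⟩ hij ⟨i', j'⟩ hij' h
  simp only [coe_product, Set.mem_prod, mem_coe, mem_compl] at hij hij'
  rcases Sym2.eq_iff.1 h with ⟨rfl, rfl⟩ | ⟨rfl, -⟩
  · rfl
  · exact absurd hij.1 hij'.2

lemma card_image_uncurry_sym2Mk_product_compl (S : Finset V) :
    #((S ×ˢ Sᶜ).image Sym2.mk.uncurry) = #S * #Sᶜ := by
  rw [card_image_of_injOn (injOn_uncurry_sym2Mk_product_compl S), card_product]

end ParityOfDegrees

instance (n : ℕ) (p : ℝ) : IsFiniteMeasure (erMeasure n p) := by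
  unfold erMeasure; infer_instance

section ErdosRenyi

variable {n : ℕ} {p : ℝ}

lemma prod_neg_one_pow_degN_erGraph (ω : Sym2 (Fin n) → Bool) (S : Finset (Fin n)) :
    ∏ i ∈ S, (-1 : ℝ) ^ degN (erGraph n ω) i
      = ∏ e ∈ (S ×ˢ Sᶜ).image Sym2.mk.uncurry, if ω e then -1 else 1 := by
  classical
  rw [prod_neg_one_pow_degN, prod_image (injOn_uncurry_sym2Mk_product_compl S)]
  refine prod_congr rfl fun x hx => if_congr ?_ rfl rfl
  have hne : x.1 ≠ x.2 := by
    simp only [mem_product, mem_compl] at hx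
    exact ne_of_mem_of_not_mem hx.1 hx.2
  simp [erGraph, hne, Function.uncurry]

lemma integral_prod_neg_one_pow_degN (hp0 : 0 ≤ p) (hp1 : p ≤ 1) (S : Finset (Fin n)) :
    ∫ ω, ∏ i ∈ S, (-1 : ℝ) ^ degN (erGraph n ω) i ∂erMeasure n p
      = (1 - 2 * p) ^ (#S * (n - #S)) := by
  classical
  simp_rw [prod_neg_one_pow_degN_erGraph]
  rw [erMeasure, integral_prod_bern hp0 hp1 _ fun x => if x then -1 else 1,
    card_image_uncurry_sym2Mk_product_compl, card_compl, Fintype.card_fin]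
  simp only [↓reduceIte, Bool.false_eq_true]
  ring

lemma measure_forall_odd_degN_toReal (hp0 : 0 ≤ p) (hp1 : p ≤ 1) (B : Finset (Fin n)) :
    (erMeasure n p {ω | ∀ i ∈ B, Odd (degN (erGraph n ω) i)}).toReal
      = (∑ t ∈ B.powerset, (-1) ^ #t * (1 - 2 * p) ^ (#t * (n - #t))) / 2 ^ #B := by
  classical
  have hindicator : {ω | ∀ i ∈ B, Odd (degN (erGraph n ω) i)}.indicator 1
      = fun ω => ∏ i ∈ B, (1 - (-1 : ℝ) ^ degN (erGraph n ω) i) / 2 := by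
    ext ω
    simp_rw [← ite_odd_eq_one_sub_neg_one_pow_div_two, prod_boole, Set.indicator_apply,
      Set.mem_ofPred_eq, Pi.one_apply]
    congr
  rw [← measureReal_def, ← integral_indicator_one .of_discrete, hindicator]
  simp_rw [prod_one_sub_div_two]
  rw [integral_div, integral_finsetSum _ fun _ _ => .of_finite]
  simp_rw [integral_const_mul, integral_prod_neg_one_pow_degN hp0 hp1]

lemma measure_odd_degN_toReal (hp0 : 0 ≤ p) (hp1 : p ≤ 1) (i : Fin n) :
    (erMeasure n p {ω | Odd (degN (erGraph n ω) i)}).toReal = (1 - (1 - 2 * p) ^ (n - 1)) / 2 := by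
  have h := measure_forall_odd_degN_toReal hp0 hp1 {i}
  rw [← insert_empty_eq, sum_powerset_insert (notMem_empty i)] at h
  simpa [← sub_eq_add_neg] using h

end ErdosRenyi

section Estimates

lemma abs_pow_sub_pow_le_two_mul {ε : ℝ} (hε : |ε| ≤ 1) {n k : ℕ} (hk : 2 * k ≤ n) :
    |ε ^ (k * (n - k)) - ε ^ ((n - 1) * k)| ≤ 2 * |ε| ^ n := by
  rcases lt_or_ge k 2 with hk2 | hk2
  · have hexp : k * (n - k) = (n - 1) * k := by interval_cases k <;> simp [mul_comm]
    rw [hexp, sub_self, abs_zero]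
    positivity
  · have h1 : n ≤ k * (n - k) := by
      obtain ⟨m, rfl⟩ := Nat.exists_eq_add_of_le (by omega : k ≤ n)
      rw [Nat.add_sub_cancel_left]
      nlinarith
    have h2 : n ≤ (n - 1) * k := by
      obtain ⟨m, rfl⟩ := Nat.exists_eq_add_of_le (by omega : 1 ≤ n)
      rw [Nat.add_sub_cancel_left]
      nlinarith
    calc |ε ^ (k * (n - k)) - ε ^ ((n - 1) * k)|
        ≤ |ε| ^ (k * (n - k)) + |ε| ^ ((n - 1) * k) := by
          rw [← abs_pow, ← abs_pow]; exact abs_sub _ _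
      _ ≤ |ε| ^ n + |ε| ^ n :=
          add_le_add (pow_le_pow_of_le_one (abs_nonneg ε) hε h1)
            (pow_le_pow_of_le_one (abs_nonneg ε) hε h2)
      _ = 2 * |ε| ^ n := by ring

lemma abs_sum_parity_sub_prod_le {ι : Type*} [DecidableEq ι] (B : Finset ι) {n : ℕ}
    (hB : 2 * #B ≤ n) {ε : ℝ} (hε : |ε| ≤ 1) :
    |(∑ t ∈ B.powerset, (-1) ^ #t * ε ^ (#t * (n - #t))) / 2 ^ #B
        - ∏ _i ∈ B, (1 - ε ^ (n - 1)) / 2| ≤ 2 * |ε| ^ n := by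
  rw [prod_one_sub_div_two, ← sub_div, ← sum_sub_distrib, abs_div,
    abs_of_pos (pow_pos (two_pos (α := ℝ)) #B), div_le_iff₀ (by positivity)]
  calc |∑ t ∈ B.powerset, ((-1) ^ #t * ε ^ (#t * (n - #t)) - (-1) ^ #t * ∏ _i ∈ t, ε ^ (n - 1))|
      ≤ ∑ _t ∈ B.powerset, 2 * |ε| ^ n := by
        refine (abs_sum_le_sum_abs _ _).trans (sum_le_sum fun t ht => ?_)
        rw [prod_const, ← pow_mul, ← mul_sub, abs_mul, abs_pow, abs_neg, abs_one, one_pow,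
          one_mul]
        exact abs_pow_sub_pow_le_two_mul hε
          ((Nat.mul_le_mul_left 2 (card_le_card (mem_powerset.1 ht))).trans hB)
    _ = 2 * |ε| ^ n * 2 ^ #B := by
        rw [sum_const, card_powerset, nsmul_eq_mul]; push_cast; ring

lemma abs_one_sub_two_mul_pow_le {n : ℕ} {p q : ℝ} (hn : 0 < n)
    (hlog : (q + 1) / 2 ≤ Real.log n) (hpl : Real.log n ^ 2 / n ≤ p)
    (hpu : p ≤ 1 - Real.log n ^ 2 / n) :
    |1 - 2 * p| ^ n ≤ 1 / (n : ℝ) ^ (q + 1) := by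
  set L := Real.log n ^ 2 / n
  have hnR : (0 : ℝ) < n := Nat.cast_pos.2 hn
  have hlog0 : 0 ≤ Real.log n := Real.log_natCast_nonneg n
  have habs : |1 - 2 * p| ≤ 1 - 2 * L := abs_le.2 ⟨by linarith, by linarith⟩
  have hLn : n * L = Real.log n ^ 2 := mul_div_cancel₀ _ hnR.ne'
  calc |1 - 2 * p| ^ n ≤ (1 - 2 * L) ^ n := pow_le_pow_left₀ (abs_nonneg _) habs n
    _ ≤ Real.exp (-2 * L) ^ n :=
        pow_le_pow_left₀ ((abs_nonneg _).trans habs) (by linarith [Real.add_one_le_exp (-2 * L)]) n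
    _ = Real.exp (-2 * Real.log n ^ 2) := by rw [← Real.exp_nat_mul, ← hLn]; ring_nf
    _ ≤ Real.exp (-(q + 1) * Real.log n) := Real.exp_le_exp.2 (by nlinarith)
    _ = 1 / (n : ℝ) ^ (q + 1) := by
        rw [Real.rpow_def_of_pos hnR, one_div, ← Real.exp_neg]; ring_nf

end Estimates

theorem near_independence_general (b : ℕ) (q : ℝ) :
    ∃ D : ℝ, 0 < D ∧ ∃ n0 : ℕ, ∀ n : ℕ, n0 ≤ n → ∀ p : ℝ,
      (Real.log n) ^ 2 / n ≤ p → p ≤ 1 - (Real.log n) ^ 2 / n →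
      |(erMeasure n p {ω | ∀ i : Fin n, (i : ℕ) < b → Odd (degN (erGraph n ω) i)}).toReal
          - ∏ i ∈ Finset.univ.filter (fun i : Fin n => (i : ℕ) < b),
              (erMeasure n p {ω | Odd (degN (erGraph n ω) i)}).toReal|
        ≤ D / (n : ℝ) ^ (q + 1) := by
  obtain ⟨n0, hn0⟩ := Filter.eventually_atTop.1 <|
    (Filter.eventually_ge_atTop (2 * b + 1)).and <|
      (Real.tendsto_log_atTop.comp tendsto_natCast_atTop_atTop).eventually_ge_atTop ((q + 1) / 2)
  refine ⟨2, two_pos, n0, fun n hn p hpl hpu => ?_⟩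
  obtain ⟨hbn, hlog⟩ := hn0 n hn
  set B := univ.filter fun i : Fin n => (i : ℕ) < b
  have hB : #B = b := by rw [Fin.card_filter_val_lt]; omega
  have hL : (0 : ℝ) ≤ Real.log n ^ 2 / n := by positivity
  have hp0 : 0 ≤ p := hL.trans hpl
  have hp1 : p ≤ 1 := hpu.trans (by linarith)
  have hset : {ω | ∀ i : Fin n, (i : ℕ) < b → Odd (degN (erGraph n ω) i)}
      = {ω | ∀ i ∈ B, Odd (degN (erGraph n ω) i)} := by simp [B]
  rw [hset, measure_forall_odd_degN_toReal hp0 hp1]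
  simp_rw [measure_odd_degN_toReal hp0 hp1]
  calc _ ≤ 2 * |1 - 2 * p| ^ n :=
        abs_sum_parity_sub_prod_le B (by omega) (abs_le.2 ⟨by linarith, by linarith⟩)
    _ ≤ 2 * (1 / (n : ℝ) ^ (q + 1)) := by
        gcongr; exact abs_one_sub_two_mul_pow_le (by omega) hlog hpl hpu
    _ = 2 / (n : ℝ) ^ (q + 1) := mul_one_div 2 _

/-- Near-independence of degree parities: for fixed `b ≥ 1`, the probability that
vertices `1,…,b` all have odd degree differs from the product of the individual
probabilities by at most `D/n^(q+1)` for all large `n`. -/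
theorem near_independence (b : ℕ) (hb : 1 ≤ b) (q : ℝ) (hq : 0 < q) :
    ∃ D : ℝ, 0 < D ∧ ∃ n0 : ℕ, ∀ n : ℕ, n0 ≤ n → ∀ p : ℝ,
      (Real.log n) ^ 2 / n ≤ p → p ≤ 1 - (Real.log n) ^ 2 / n →
      |(erMeasure n p {ω | ∀ i : Fin n, (i : ℕ) < b → Odd (degN (erGraph n ω) i)}).toReal
          - ∏ i ∈ Finset.univ.filter (fun i : Fin n => (i : ℕ) < b),
              (erMeasure n p {ω | Odd (degN (erGraph n ω) i)}).toReal|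
        ≤ D / (n : ℝ) ^ (q + 1) :=
  near_independence_general b q
end

section
/- In G(n,p), the probability that the connected component containing a fixed vertex i has exactly r vertices is at most C(n-1, r-1) · r^{r-2} · p^{r-1} · (1-p)^{r(n-r)}. -/
/-!
If the component of `i` is a set `S` of `r` vertices, then `G[S]` contains a spanning tree and no
edge joins `S` to its complement. Encoding spanning trees by their parent maps towards `i` (a
breadth-first search tree exists), a union bound over the `C(n-1, r-1)` choices of `S` and over the
trees gives the claim: by independence each such event has probability
`p^(r-1) (1-p)^(r(n-r))`, and there are at most `r^(r-2)` trees on `S` rooted at `i`, because the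
Prüfer code (delete the largest leaf, record its parent, repeat) is injective and ends with `i`.
-/

open MeasureTheory

open Finset

namespace Function

variable {α : Type*}

/-- Junk value `0` when no iterate of `f` sends `v` to `i`. -/
noncomputable def depth (i : α) (f : α → α) (v : α) : ℕ := sInf {k | f^[k] v = i}

lemma iterate_depth {i : α} {f : α → α} {v : α} (h : ∃ k, f^[k] v = i) :
    f^[depth i f v] v = i :=
  Nat.sInf_mem h

lemma depth_apply_lt {i : α} {f : α → α} {v : α} (h : ∃ k, f^[k] v = i) (hv : v ≠ i) :
    depth i f (f v) < depth i f v := by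
  obtain ⟨d, hd⟩ : ∃ d, depth i f v = d + 1 :=
    Nat.exists_eq_succ_of_ne_zero fun h0 => hv (by simpa [h0] using iterate_depth h)
  have hfv := iterate_depth h
  rw [hd, iterate_succ_apply] at hfv
  exact hd ▸ Nat.lt_succ_of_le (Nat.sInf_le hfv)

lemma exists_iterate_eq_of_lt {i : α} {f : α → α} {P : α → Prop} (μ : α → ℕ)
    (hf : ∀ v, P v → v ≠ i → P (f v) ∧ μ (f v) < μ v) {v : α} (hv : P v) :
    ∃ k, f^[k] v = i := by
  induction hμ : μ v using Nat.strong_induction_on generalizing v with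
  | _ m ih =>
    by_cases hvi : v = i
    · exact ⟨0, hvi⟩
    obtain ⟨hPf, hlt⟩ := hf v hv hvi
    obtain ⟨k, hk⟩ := ih _ (hμ ▸ hlt) hPf rfl
    exact ⟨k + 1, hk⟩

end Function

open Function

variable {α : Type*}

/-- `f` restricted to `V` is the parent map of a tree on `insert i V` rooted at `i`. -/
structure IsParentMap (i : α) (V : Finset α) (f : α → α) : Prop where
  root_notMem : i ∉ V
  mapsTo : ∀ v ∈ V, f v = i ∨ f v ∈ V
  reaches_root : ∀ v ∈ V, ∃ k, f^[k] v = i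

namespace IsParentMap

variable {i : α} {V : Finset α} {f : α → α}

lemma ne_root (hf : IsParentMap i V f) {v : α} (hv : v ∈ V) : v ≠ i :=
  fun h => hf.root_notMem (h ▸ hv)

lemma depth_apply_lt (hf : IsParentMap i V f) {v : α} (hv : v ∈ V) :
    depth i f (f v) < depth i f v :=
  Function.depth_apply_lt (hf.reaches_root v hv) (hf.ne_root hv)

lemma apply_ne (hf : IsParentMap i V f) {v : α} (hv : v ∈ V) : f v ≠ v :=
  fun h => (hf.depth_apply_lt hv).ne (by rw [h])

lemma erase [DecidableEq α] (hf : IsParentMap i V f) {v : α} (hv : ∀ w ∈ V, f w ≠ v) :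
    IsParentMap i (V.erase v) f where
  root_notMem h := hf.root_notMem (mem_of_mem_erase h)
  mapsTo w hw := by
    have hwV := mem_of_mem_erase hw
    exact (hf.mapsTo w hwV).imp_right fun h => mem_erase.2 ⟨hv w hwV, h⟩
  reaches_root w hw := hf.reaches_root w (mem_of_mem_erase hw)

end IsParentMap

section Prufer

variable [LinearOrder α]

def leaves (f : α → α) (V : Finset α) : Finset α := {v ∈ V | ∀ w ∈ V, f w ≠ v}

lemma IsParentMap.leaves_nonempty {i : α} {V : Finset α} {f : α → α} (hf : IsParentMap i V f)
    (hV : V.Nonempty) : (leaves f V).Nonempty := by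
  obtain ⟨v, hv, hmax⟩ := exists_max_image V (depth i f) hV
  exact ⟨v, mem_filter.2 ⟨hv, fun w hw hwv =>
    (hwv ▸ hf.depth_apply_lt hw).not_ge (hmax w hw)⟩⟩

def pruferCode (f : α → α) (V : Finset α) : List α :=
  if h : (leaves f V).Nonempty then
    f ((leaves f V).max' h) :: pruferCode f (V.erase ((leaves f V).max' h))
  else []
termination_by V.card
decreasing_by exact card_erase_lt_of_mem (mem_of_mem_filter _ (max'_mem _ h))

variable {i : α} {V : Finset α} {f g : α → α}

lemma max'_leaves_mem (h : (leaves f V).Nonempty) : (leaves f V).max' h ∈ V :=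
  mem_of_mem_filter _ (max'_mem _ h)

lemma apply_ne_max'_leaves (h : (leaves f V).Nonempty) :
    ∀ w ∈ V, f w ≠ (leaves f V).max' h :=
  (mem_filter.1 (max'_mem _ h)).2

lemma IsParentMap.erase_max'_leaves (hf : IsParentMap i V f) (h : (leaves f V).Nonempty) :
    IsParentMap i (V.erase ((leaves f V).max' h)) f :=
  hf.erase (apply_ne_max'_leaves h)

lemma pruferCode_of_nonempty (h : (leaves f V).Nonempty) :
    pruferCode f V = f ((leaves f V).max' h) :: pruferCode f (V.erase ((leaves f V).max' h)) := by
  rw [pruferCode, dif_pos h]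

lemma pruferCode_of_not_nonempty (h : ¬(leaves f V).Nonempty) : pruferCode f V = [] := by
  rw [pruferCode, dif_neg h]

lemma IsParentMap.eq_empty_of_leaves (hf : IsParentMap i V f) (h : ¬(leaves f V).Nonempty) :
    V = ∅ :=
  not_nonempty_iff_eq_empty.1 fun hV => h (hf.leaves_nonempty hV)

lemma IsParentMap.length_pruferCode (hf : IsParentMap i V f) : (pruferCode f V).length = #V := by
  induction V using pruferCode.induct f with
  | case1 V h ih =>
    rw [pruferCode_of_nonempty h, List.length_cons, ih (hf.erase_max'_leaves h),
      card_erase_add_one (max'_leaves_mem h)]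
  | case2 V h =>
    rw [pruferCode_of_not_nonempty h, hf.eq_empty_of_leaves h, card_empty, List.length_nil]

lemma IsParentMap.mem_pruferCode (hf : IsParentMap i V f) {u : α} :
    u ∈ pruferCode f V ↔ ∃ w ∈ V, f w = u := by
  induction V using pruferCode.induct f with
  | case1 V h ih =>
    rw [pruferCode_of_nonempty h, List.mem_cons, ih (hf.erase_max'_leaves h)]
    constructor
    · rintro (rfl | ⟨w, hw, rfl⟩)
      exacts [⟨_, max'_leaves_mem h, rfl⟩, ⟨w, mem_of_mem_erase hw, rfl⟩]
    · rintro ⟨w, hw, rfl⟩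
      by_cases hwv : w = (leaves f V).max' h
      · exact Or.inl (hwv ▸ rfl)
      · exact Or.inr ⟨w, mem_erase.2 ⟨hwv, hw⟩, rfl⟩
  | case2 V h =>
    rw [pruferCode_of_not_nonempty h, hf.eq_empty_of_leaves h]
    simp

/-- Decoding step: the leaves are recovered from the code. -/
lemma IsParentMap.leaves_eq (hf : IsParentMap i V f) :
    leaves f V = {v ∈ V | v ∉ pruferCode f V} := by
  ext v
  simp [leaves, hf.mem_pruferCode]

lemma IsParentMap.getD_pruferCode (hf : IsParentMap i V f) {j : ℕ} (hj : #V - 1 ≤ j) :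
    (pruferCode f V).getD j i = i := by
  induction V using pruferCode.induct f generalizing j with
  | case1 V h ih =>
    set v := (leaves f V).max' h
    have hvV : v ∈ V := max'_leaves_mem h
    rw [pruferCode_of_nonempty h]
    cases j with
    | zero =>
      refine (hf.mapsTo v hvV).resolve_right fun hfv => hf.apply_ne hvV ?_
      exact card_le_one.1 (by omega) _ hfv _ hvV
    | succ j =>
      rw [List.getD_cons_succ]
      exact ih (hf.erase_max'_leaves h) (by rw [card_erase_of_mem hvV]; omega)
  | case2 V h => rw [pruferCode_of_not_nonempty h, List.getD_nil]

lemma IsParentMap.eqOn_of_pruferCode_eq (hf : IsParentMap i V f) (hg : IsParentMap i V g)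
    (hfg : pruferCode f V = pruferCode g V) : ∀ v ∈ V, f v = g v := by
  induction V using pruferCode.induct f generalizing g with
  | case1 V h ih =>
    have hleaves : leaves g V = leaves f V := by rw [hf.leaves_eq, hg.leaves_eq, hfg]
    have hg' : (leaves g V).Nonempty := hleaves ▸ h
    have hmax : (leaves g V).max' hg' = (leaves f V).max' h := by congr 1
    have hg'' := hg.erase_max'_leaves hg'
    rw [pruferCode_of_nonempty h, pruferCode_of_nonempty hg', List.cons.injEq, hmax] at hfg
    rw [hmax] at hg''
    intro v hv
    by_cases hvm : v = (leaves f V).max' h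
    · exact hvm ▸ hfg.1
    · exact ih (hf.erase_max'_leaves h) hg'' hfg.2 v (mem_erase.2 ⟨hvm, hv⟩)
  | case2 V h => simp [hf.eq_empty_of_leaves h]

end Prufer

section Counting

variable [Fintype α]

open Classical in
noncomputable def parentMaps (i : α) (V : Finset α) : Finset (α → α) :=
  {f | (∀ v ∉ V, f v = v) ∧ IsParentMap i V f}

lemma mem_parentMaps {i : α} {V : Finset α} {f : α → α} :
    f ∈ parentMaps i V ↔ (∀ v ∉ V, f v = v) ∧ IsParentMap i V f := by
  simp [parentMaps]

/-- The last entry of the Prüfer code is always the root, so only the first `#V - 1` entries are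
kept. -/
lemma card_parentMaps_le [LinearOrder α] (i : α) (V : Finset α) :
    #(parentMaps i V) ≤ (#V + 1) ^ (#V - 1) := by
  classical
  let code : (α → α) → Fin (#V - 1) → α := fun f j => (pruferCode f V).getD j i
  calc #(parentMaps i V)
      ≤ #(Fintype.piFinset fun _ : Fin (#V - 1) => insert i V) := by
        refine card_le_card_of_injOn code (fun f hf => ?_) (fun f hf g hg hfg => ?_)
        · rw [mem_coe, mem_parentMaps] at hf
          refine Fintype.mem_piFinset.2 fun j => mem_insert.2 ?_
          dsimp only [code]
          rcases lt_or_ge (j : ℕ) (pruferCode f V).length with hj | hj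
          · obtain ⟨w, hw, hfw⟩ := hf.2.mem_pruferCode.1 (List.getElem_mem hj)
            rw [List.getD_eq_getElem _ _ hj, ← hfw]
            exact hf.2.mapsTo w hw
          · exact Or.inl (List.getD_eq_default _ _ hj)
        · rw [mem_coe, mem_parentMaps] at hf hg
          have hcode : pruferCode f V = pruferCode g V := by
            refine List.ext_getElem (by rw [hf.2.length_pruferCode, hg.2.length_pruferCode])
              fun j hjf hjg => ?_
            rw [← List.getD_eq_getElem _ i hjf, ← List.getD_eq_getElem _ i hjg]
            rcases lt_or_ge j (#V - 1) with hj | hj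
            · exact congrFun hfg ⟨j, hj⟩
            · rw [hf.2.getD_pruferCode hj, hg.2.getD_pruferCode hj]
          funext v
          by_cases hv : v ∈ V
          · exact hf.2.eqOn_of_pruferCode_eq hg.2 hcode v hv
          · rw [hf.1 v hv, hg.1 v hv]
    _ ≤ (#V + 1) ^ (#V - 1) := by
        rw [Fintype.card_piFinset_const]
        exact Nat.pow_le_pow_left (card_insert_le i V) _

end Counting

section Edges

variable [DecidableEq α]

def treeEdges (V : Finset α) (f : α → α) : Finset (Sym2 α) := V.image fun v => s(v, f v)

def crossEdges [Fintype α] (S : Finset α) : Finset (Sym2 α) := (S ×ˢ Sᶜ).image fun q => s(q.1, q.2)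

lemma IsParentMap.card_treeEdges {i : α} {V : Finset α} {f : α → α} (hf : IsParentMap i V f) :
    #(treeEdges V f) = #V := by
  refine card_image_of_injOn fun v hv w hw hvw => ?_
  rcases Sym2.eq_iff.1 hvw with ⟨h, -⟩ | ⟨hvf, hwf⟩
  · exact h
  · have := hf.depth_apply_lt (mem_coe.1 hv)
    have := hf.depth_apply_lt (mem_coe.1 hw)
    rw [← hvf, ← hwf] at *
    omega

lemma card_crossEdges [Fintype α] (S : Finset α) : #(crossEdges S) = #S * #Sᶜ := by
  rw [crossEdges, card_image_of_injOn, card_product]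
  rintro ⟨a, b⟩ hab ⟨c, d⟩ hcd h
  simp only [coe_product, coe_compl, Set.mem_prod, mem_coe, Set.mem_compl_iff] at hab hcd
  rcases Sym2.eq_iff.1 h with ⟨rfl, rfl⟩ | ⟨rfl, -⟩
  · rfl
  · exact absurd hab.1 hcd.2

lemma IsParentMap.disjoint_treeEdges_crossEdges [Fintype α] {i : α} {V : Finset α} {f : α → α}
    (hf : IsParentMap i V f) : Disjoint (treeEdges V f) (crossEdges (insert i V)) := by
  refine disjoint_left.2 fun e he hce => ?_
  obtain ⟨v, hv, rfl⟩ := mem_image.1 he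
  obtain ⟨⟨a, b⟩, hab, hab_eq⟩ := mem_image.1 hce
  simp only [mem_product, mem_compl, mem_insert] at hab
  rcases Sym2.eq_iff.1 hab_eq with ⟨-, rfl⟩ | ⟨-, rfl⟩
  · exact hab.2 (hf.mapsTo v hv)
  · exact hab.2 (Or.inr hv)

end Edges

namespace SimpleGraph

variable {G : SimpleGraph α}

lemma Reachable.exists_adj_dist_lt {i v : α} (h : G.Reachable i v) (hv : v ≠ i) :
    ∃ w, G.Adj v w ∧ G.Reachable i w ∧ G.dist i w < G.dist i v := by
  obtain ⟨p, hp⟩ := h.exists_walk_length_eq_dist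
  cases p with
  | nil => exact absurd rfl hv
  | cons hadj q =>
    obtain ⟨w, q', hwv, hq⟩ := Walk.exists_cons_eq_concat hadj q
    refine ⟨w, hwv.symm, ⟨q'⟩, ?_⟩
    have hlen : q'.length + 1 = G.dist i v := by rw [← hp, hq, Walk.length_concat]
    have := dist_le q'
    omega

/-- A breadth-first search tree: each vertex points to a neighbour closer to `i`. -/
lemma exists_mem_parentMaps_adj [Fintype α] [DecidableEq α] {i : α} {S : Finset α}
    (hS : ∀ v, v ∈ S ↔ G.Reachable i v) :
    ∃ f ∈ parentMaps i (S.erase i), ∀ v ∈ S.erase i, G.Adj v (f v) := by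
  have hpar : ∀ v ∈ S.erase i, ∃ w, G.Adj v w ∧ G.Reachable i w ∧ G.dist i w < G.dist i v :=
    fun v hv => ((hS v).1 (mem_of_mem_erase hv)).exists_adj_dist_lt (ne_of_mem_erase hv)
  choose par hadj hreach hdist using hpar
  let f : α → α := fun v => if hv : v ∈ S.erase i then par v hv else v
  have hf : ∀ v (hv : v ∈ S.erase i), f v = par v hv := fun v hv => dif_pos hv
  have hfS : ∀ v (hv : v ∈ S.erase i), f v ∈ S := fun v hv => (hS _).2 (hf v hv ▸ hreach v hv)
  refine ⟨f, mem_parentMaps.2 ⟨fun v hv => dif_neg hv, ⟨notMem_erase i S, fun v hv => ?_,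
    fun v hv => ?_⟩⟩, fun v hv => hf v hv ▸ hadj v hv⟩
  · by_cases hfv : f v = i
    · exact Or.inl hfv
    · exact Or.inr (mem_erase.2 ⟨hfv, hfS v hv⟩)
  · refine exists_iterate_eq_of_lt (G.dist i) (P := (· ∈ S)) (fun w hw hwi => ?_)
      (mem_of_mem_erase hv)
    have hw' : w ∈ S.erase i := mem_erase.2 ⟨hwi, hw⟩
    exact ⟨hfS w hw', hf w hw' ▸ hdist w hw'⟩

end SimpleGraph

lemma bern_singleton_true (p : ℝ) : bern p {true} = ENNReal.ofReal p := by
  simp [bern, ENNReal.ofReal]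

lemma bern_singleton_false (p : ℝ) : bern p {false} = ENNReal.ofReal (1 - p) := by
  simp [bern, ENNReal.ofReal]

lemma bern_univ {p : ℝ} (hp0 : 0 ≤ p) (hp1 : p ≤ 1) : bern p Set.univ = 1 := by
  simp only [bern, Measure.add_apply, Measure.smul_apply, measure_univ, ENNReal.smul_def,
    smul_eq_mul, mul_one]
  rw [← ENNReal.coe_add, ← Real.toNNReal_add hp0 (by linarith)]
  simp

def cylinderEvent {ι : Type*} (A B : Finset ι) : Set (ι → Bool) :=
  {ω | (∀ e ∈ A, ω e = true) ∧ ∀ e ∈ B, ω e = false}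

lemma pi_bern_cylinderEvent {ι : Type*} [Fintype ι] {p : ℝ} (hp0 : 0 ≤ p) (hp1 : p ≤ 1)
    {A B : Finset ι} (hAB : Disjoint A B) :
    Measure.pi (fun _ : ι => bern p) (cylinderEvent A B)
      = ENNReal.ofReal p ^ #A * ENNReal.ofReal (1 - p) ^ #B := by
  classical
  have hpi : cylinderEvent A B
      = Set.univ.pi fun e => {b | (e ∈ A → b = true) ∧ (e ∈ B → b = false)} := by
    ext ω
    simp [cylinderEvent, forall_and]
  have hfactor : ∀ e, bern p {b | (e ∈ A → b = true) ∧ (e ∈ B → b = false)}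
      = (if e ∈ A then ENNReal.ofReal p else 1) *
        (if e ∈ B then ENNReal.ofReal (1 - p) else 1) := by
    intro e
    by_cases hA : e ∈ A
    · have hB : e ∉ B := disjoint_left.1 hAB hA
      simpa [hA, hB, Set.ofPred_eq_eq_singleton] using bern_singleton_true p
    by_cases hB : e ∈ B
    · simpa [hA, hB, Set.ofPred_eq_eq_singleton] using bern_singleton_false p
    · simpa [hA, hB] using bern_univ hp0 hp1
  simp only [hpi, Measure.pi_pi, hfactor, prod_mul_distrib, prod_ite_mem, univ_inter, prod_const]

lemma erGraph_adj {n : ℕ} {ω : Sym2 (Fin n) → Bool} {a b : Fin n} :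
    (erGraph n ω).Adj a b ↔ ω s(a, b) = true ∧ a ≠ b := by
  simp [erGraph]

lemma setOf_card_reachable_eq_subset (n r : ℕ) (i : Fin n) :
    {ω : Sym2 (Fin n) → Bool | Nat.card {v : Fin n // (erGraph n ω).Reachable i v} = r} ⊆
      ⋃ T ∈ (univ.erase i).powersetCard (r - 1), ⋃ f ∈ parentMaps i T,
        cylinderEvent (treeEdges T f) (crossEdges (insert i T)) := by
  classical
  intro ω hω
  set G := erGraph n ω
  let S : Finset (Fin n) := {v | G.Reachable i v}
  have hS : ∀ v, v ∈ S ↔ G.Reachable i v := by simp [S]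
  have hiS : i ∈ S := (hS i).2 (SimpleGraph.Reachable.refl i)
  have hcard : #S = r := by
    rw [← hω, Nat.card_eq_fintype_card, Fintype.card_subtype]
  obtain ⟨f, hf, hadj⟩ := G.exists_mem_parentMaps_adj hS
  refine Set.mem_iUnion₂.2 ⟨S.erase i, mem_powersetCard.2 ⟨erase_subset_erase _ (subset_univ _),
    by rw [card_erase_of_mem hiS, hcard]⟩, Set.mem_iUnion₂.2 ⟨f, hf, ?_, ?_⟩⟩
  · intro e he
    obtain ⟨v, hv, rfl⟩ := mem_image.1 he
    exact (erGraph_adj.1 (hadj v hv)).1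
  · intro e he
    obtain ⟨⟨a, b⟩, hab, rfl⟩ := mem_image.1 he
    rw [insert_erase hiS, mem_product, mem_compl] at hab
    refine Bool.eq_false_iff.2 fun hωab => hab.2 ((hS b).2 ?_)
    exact ((hS a).1 hab.1).trans (erGraph_adj.2 ⟨hωab, fun h => hab.2 (h ▸ hab.1)⟩).reachable

lemma erMeasure_cylinderEvent_treeEdges {n : ℕ} {p : ℝ} (hp0 : 0 ≤ p) (hp1 : p ≤ 1) {i : Fin n}
    {T : Finset (Fin n)} {f : Fin n → Fin n} (hf : IsParentMap i T f) :
    erMeasure n p (cylinderEvent (treeEdges T f) (crossEdges (insert i T)))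
      = ENNReal.ofReal (p ^ #T * (1 - p) ^ ((#T + 1) * (n - (#T + 1)))) := by
  rw [erMeasure, pi_bern_cylinderEvent hp0 hp1 hf.disjoint_treeEdges_crossEdges,
    hf.card_treeEdges, card_crossEdges, card_compl, Fintype.card_fin,
    card_insert_of_notMem hf.root_notMem, ENNReal.ofReal_mul (by positivity),
    ENNReal.ofReal_pow hp0, ENNReal.ofReal_pow (by linarith)]

lemma sum_erMeasure_cylinderEvent_treeEdges_le {n r : ℕ} (hr : 1 ≤ r) {p : ℝ} (hp0 : 0 ≤ p)
    (hp1 : p ≤ 1) {i : Fin n} {T : Finset (Fin n)} (hT : #T = r - 1) :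
    ∑ f ∈ parentMaps i T, erMeasure n p (cylinderEvent (treeEdges T f) (crossEdges (insert i T)))
      ≤ (r ^ (r - 2) : ℕ) * ENNReal.ofReal (p ^ (r - 1) * (1 - p) ^ (r * (n - r))) := by
  have hT1 : #T + 1 = r := by omega
  calc _ = ∑ f ∈ parentMaps i T, ENNReal.ofReal (p ^ (r - 1) * (1 - p) ^ (r * (n - r))) :=
        sum_congr rfl fun f hf => by
          rw [erMeasure_cylinderEvent_treeEdges hp0 hp1 (mem_parentMaps.1 hf).2, hT1, hT]
    _ ≤ _ := by
        rw [sum_const, nsmul_eq_mul, show r - 2 = #T - 1 by omega, ← hT1]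
        gcongr
        exact_mod_cast card_parentMaps_le i T

theorem component_size_prob_general (n r : ℕ) (hr : 1 ≤ r) (p : ℝ)
    (hp0 : 0 ≤ p) (hp1 : p ≤ 1) (i : Fin n) :
    erMeasure n p {ω | Nat.card {v : Fin n // (erGraph n ω).Reachable i v} = r}
      ≤ ENNReal.ofReal (((n - 1).choose (r - 1) : ℝ) * (r : ℝ) ^ (r - 2)
          * p ^ (r - 1) * (1 - p) ^ (r * (n - r))) := by
  classical
  calc _ ≤ ∑ T ∈ (univ.erase i).powersetCard (r - 1), ∑ f ∈ parentMaps i T,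
          erMeasure n p (cylinderEvent (treeEdges T f) (crossEdges (insert i T))) :=
        (measure_mono (setOf_card_reachable_eq_subset n r i)).trans <|
          (measure_biUnion_finset_le _ _).trans
            (sum_le_sum fun T _ => measure_biUnion_finset_le _ _)
    _ ≤ ∑ T ∈ (univ.erase i).powersetCard (r - 1),
          (r ^ (r - 2) : ℕ) * ENNReal.ofReal (p ^ (r - 1) * (1 - p) ^ (r * (n - r))) :=
        sum_le_sum fun T hT =>
          sum_erMeasure_cylinderEvent_treeEdges_le hr hp0 hp1 (mem_powersetCard.1 hT).2
    _ = _ := by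
        rw [sum_const, card_powersetCard, card_erase_of_mem (mem_univ i), card_univ,
          Fintype.card_fin, nsmul_eq_mul, ← mul_assoc, ← ENNReal.ofReal_natCast,
          ← ENNReal.ofReal_natCast, ← ENNReal.ofReal_mul (by positivity),
          ← ENNReal.ofReal_mul (by positivity)]
        push_cast
        congr 1
        ring

/-- The probability that the component of vertex `i` in `G(n,p)` has exactly `r`
vertices is at most `C(n-1,r-1) r^(r-2) p^(r-1) (1-p)^(r(n-r))`. -/
theorem component_size_prob (n r : ℕ) (hr : 1 ≤ r) (hrn : r ≤ n) (p : ℝ)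
    (hp0 : 0 ≤ p) (hp1 : p ≤ 1) (i : Fin n) :
    erMeasure n p {ω | Nat.card {v : Fin n // (erGraph n ω).Reachable i v} = r}
      ≤ ENNReal.ofReal (((n - 1).choose (r - 1) : ℝ) * (r : ℝ) ^ (r - 2)
          * p ^ (r - 1) * (1 - p) ^ (r * (n - r))) :=
  component_size_prob_general n r hr p hp0 hp1 i
end

section
/- Let G be a connected graph on n ≥ 3 vertices with T ≥ 2 odd-degree vertices, such that every pair of vertices has a common neighbor. Pair up the odd vertices as (u_1,u_2),...,(u_{T-1},u_T) and toggle (add if absent, delete if present) the edge within each pair. The resulting graph is Eulerian, and hence N_edit(G) = T/2. -/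
/-- A graph is Eulerian iff it is connected, every vertex has even degree,
and it has at least one edge. -/
def IsEulerian {V : Type*} (G : SimpleGraph V) : Prop :=
  G.Connected ∧ (∀ v, Even (degN G v)) ∧ G.edgeSet.Nonempty

/-- The minimum number of single-edge edits (additions or deletions) needed to
transform `G` into `H`: the size of the symmetric difference of edge sets. -/
noncomputable def editCount {V : Type*} (G H : SimpleGraph V) : ℕ :=
  Nat.card ↥(symmDiff G.edgeSet H.edgeSet)

/-- Eulerian edit number: minimum number of single-edge additions/deletions
needed to turn `G` into an Eulerian graph. -/
noncomputable def Nedit {V : Type*} (G : SimpleGraph V) : ℕ :=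
  sInf {k | ∃ H : SimpleGraph V, IsEulerian H ∧ editCount G H = k}

/-- Eulerian extension number: minimum number of edge additions making `G` Eulerian. -/
noncomputable def Next {V : Type*} (G : SimpleGraph V) : ℕ :=
  sInf {k | ∃ H : SimpleGraph V, IsEulerian H ∧ G ≤ H ∧ Nat.card ↥(H.edgeSet \ G.edgeSet) = k}

/-- Eulerian reduction number: minimum number of edge deletions making `G` Eulerian
(with at least one edge remaining). -/
noncomputable def Nred {V : Type*} (G : SimpleGraph V) : ℕ :=
  sInf {k | ∃ H : SimpleGraph V, IsEulerian H ∧ H ≤ G ∧ Nat.card ↥(G.edgeSet \ H.edgeSet) = k}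

open SimpleGraph
open scoped symmDiff

theorem Set.ncard_symmDiff_add_two_mul_ncard_inter {α : Type*} {s t : Set α}
    (hs : s.Finite) (ht : t.Finite) :
    (s ∆ t).ncard + 2 * (s ∩ t).ncard = s.ncard + t.ncard := by
  rw [Set.symmDiff_def, Set.ncard_union_eq disjoint_sdiff_sdiff hs.sdiff ht.sdiff,
    ← Set.ncard_inter_add_ncard_sdiff_eq_ncard s t hs,
    ← Set.ncard_inter_add_ncard_sdiff_eq_ncard t s ht, Set.inter_comm t s]
  ring

theorem Set.ncard_le_two_mul_ncard_of_forall_exists_mem {V : Type*} {S : Set V}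
    {D : Set (Sym2 V)} (hD : D.Finite) (hS : ∀ v ∈ S, ∃ e ∈ D, v ∈ e) :
    S.ncard ≤ 2 * D.ncard := by
  classical
  have hcover : S ⊆ ↑(hD.toFinset.biUnion Sym2.toFinset) := fun v hv => by
    obtain ⟨e, he, hve⟩ := hS v hv
    simpa using ⟨e, he, hve⟩
  calc S.ncard ≤ (hD.toFinset.biUnion Sym2.toFinset).card :=
        (Set.ncard_le_ncard hcover (Finset.finite_toSet _)).trans_eq (Set.ncard_coe_finset _)
    _ ≤ ∑ e ∈ hD.toFinset, e.toFinset.card := Finset.card_biUnion_le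
    _ ≤ ∑ _e ∈ hD.toFinset, 2 := Finset.sum_le_sum fun e _ => by
        rw [Sym2.card_toFinset]; split_ifs <;> norm_num
    _ = 2 * D.ncard := by
        rw [Finset.sum_const, smul_eq_mul, mul_comm, Set.ncard_eq_toFinset_card D hD]

structure IsPerfectPairing {V : Type*} (M : Set (Sym2 V)) (S : Set V) : Prop where
  not_isDiag : ∀ e ∈ M, ¬ e.IsDiag
  mem_of_mem : ∀ e ∈ M, ∀ v ∈ e, v ∈ S
  existsUnique : ∀ v ∈ S, ∃! e, e ∈ M ∧ v ∈ e

namespace IsPerfectPairing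

variable {V : Type*} {M : Set (Sym2 V)} {S : Set V}

theorem eq_of_mem (hM : IsPerfectPairing M S) {v : V} {e e' : Sym2 V} (he : e ∈ M)
    (he' : e' ∈ M) (hve : v ∈ e) (hve' : v ∈ e') : e = e' :=
  (hM.existsUnique v (hM.mem_of_mem e he v hve)).unique ⟨he, hve⟩ ⟨he', hve'⟩

theorem ncard_setOf_mk_mem_of_mem (hM : IsPerfectPairing M S) {v : V} (hv : v ∈ S) :
    {w | s(v, w) ∈ M}.ncard = 1 := by
  obtain ⟨e, ⟨he, hve⟩, -⟩ := hM.existsUnique v hv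
  rw [Set.ncard_eq_one]
  refine ⟨Sym2.Mem.other hve, Set.ext fun w => ⟨fun hw => ?_, fun hw => ?_⟩⟩
  · exact Sym2.congr_right.mp ((hM.eq_of_mem hw he (Sym2.mem_mk_left v w) hve).trans
      (Sym2.other_spec hve).symm)
  · rw [Set.mem_singleton_iff.mp hw]
    change s(v, _) ∈ M
    rwa [Sym2.other_spec hve]

theorem ncard_setOf_mk_mem_of_notMem (hM : IsPerfectPairing M S) {v : V} (hv : v ∉ S) :
    {w | s(v, w) ∈ M}.ncard = 0 := by
  have hempty : {w | s(v, w) ∈ M} = ∅ :=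
    Set.eq_empty_of_forall_notMem fun w hw => hv (hM.mem_of_mem _ hw v (Sym2.mem_mk_left v w))
  rw [hempty, Set.ncard_empty]

theorem ncard_eq_two_mul_ncard [Finite V] (hM : IsPerfectPairing M S) :
    S.ncard = 2 * M.ncard := by
  classical
  have := Fintype.ofFinite V
  have hS : S.toFinset = M.toFinset.biUnion Sym2.toFinset := by
    ext v
    simp only [Set.mem_toFinset, Finset.mem_biUnion, Sym2.mem_toFinset]
    exact ⟨fun hv => (hM.existsUnique v hv).exists,
      fun ⟨e, he, hve⟩ => hM.mem_of_mem e he v hve⟩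
  have hdisj : (M.toFinset : Set (Sym2 V)).PairwiseDisjoint Sym2.toFinset :=
    fun e he e' he' hne => Finset.disjoint_left.mpr fun v hve hve' => hne <|
      hM.eq_of_mem (by simpa using he) (by simpa using he')
        (by simpa using hve) (by simpa using hve')
  rw [Set.ncard_eq_toFinset_card', Set.ncard_eq_toFinset_card', hS, Finset.card_biUnion hdisj,
    Finset.sum_congr rfl fun e he => Sym2.card_toFinset_of_not_isDiag e
      (hM.not_isDiag e (by simpa using he)),
    Finset.sum_const, smul_eq_mul, mul_comm]

end IsPerfectPairing

namespace SimpleGraph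

variable {V : Type*}

theorem Connected.of_adj_reachable {G H : SimpleGraph V} (hG : G.Connected)
    (h : ∀ ⦃a b⦄, G.Adj a b → H.Reachable a b) : H.Connected := by
  have := hG.nonempty
  refine ⟨fun u v => ?_⟩
  simp only [reachable_iff_reflTransGen] at h ⊢
  exact ((reachable_iff_reflTransGen u v).mp (hG u v)).lift' id h

theorem exists_mem_symmDiff_edgeSet_of_degN_ne {G H : SimpleGraph V} {v : V}
    (h : degN G v ≠ degN H v) : ∃ e ∈ G.edgeSet ∆ H.edgeSet, v ∈ e := by
  contrapose! h
  suffices G.neighborSet v = H.neighborSet v by rw [degN, degN, this]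
  ext w
  have := h s(v, w)
  simp only [Set.mem_symmDiff, mem_edgeSet, Sym2.mem_mk_left, not_true_eq_false] at this
  simp only [mem_neighborSet]
  tauto

theorem card_odd_degN_le_two_mul_editCount [Finite V] {G H : SimpleGraph V}
    (hH : ∀ v, Even (degN H v)) : Nat.card {v // Odd (degN G v)} ≤ 2 * editCount G H := by
  change Nat.card {v | Odd (degN G v)} ≤ _
  rw [editCount, Nat.card_coe_set_eq, Nat.card_coe_set_eq]
  refine Set.ncard_le_two_mul_ncard_of_forall_exists_mem (Set.toFinite _) fun v hv => ?_
  exact exists_mem_symmDiff_edgeSet_of_degN_ne fun h => Nat.not_even_iff_odd.mpr hv (h ▸ hH v)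

variable (G : SimpleGraph V) {M : Set (Sym2 V)}

theorem edgeSet_fromEdgeSet_symmDiff (hM : ∀ e ∈ M, ¬ e.IsDiag) :
    (fromEdgeSet (G.edgeSet ∆ M)).edgeSet = G.edgeSet ∆ M := by
  rw [edgeSet_fromEdgeSet, sdiff_eq_left, Set.disjoint_left]
  rintro e (⟨he, -⟩ | ⟨he, -⟩)
  exacts [G.not_isDiag_of_mem_edgeSet he, hM e he]

theorem editCount_fromEdgeSet_symmDiff (hM : ∀ e ∈ M, ¬ e.IsDiag) :
    editCount G (fromEdgeSet (G.edgeSet ∆ M)) = Nat.card M := by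
  rw [editCount, edgeSet_fromEdgeSet_symmDiff G hM, symmDiff_symmDiff_cancel_left]

theorem neighborSet_fromEdgeSet_symmDiff (hM : ∀ e ∈ M, ¬ e.IsDiag) (v : V) :
    (fromEdgeSet (G.edgeSet ∆ M)).neighborSet v = G.neighborSet v ∆ {w | s(v, w) ∈ M} := by
  ext w
  rw [mem_neighborSet, ← mem_edgeSet, edgeSet_fromEdgeSet_symmDiff G hM]
  rfl

theorem degN_fromEdgeSet_symmDiff_add [Finite V] (hM : ∀ e ∈ M, ¬ e.IsDiag) (v : V) :
    degN (fromEdgeSet (G.edgeSet ∆ M)) v + 2 * (G.neighborSet v ∩ {w | s(v, w) ∈ M}).ncard =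
      degN G v + {w | s(v, w) ∈ M}.ncard := by
  rw [degN, degN, Nat.card_coe_set_eq, Nat.card_coe_set_eq, neighborSet_fromEdgeSet_symmDiff G hM,
    Set.ncard_symmDiff_add_two_mul_ncard_inter (Set.toFinite _) (Set.toFinite _)]

theorem even_degN_fromEdgeSet_symmDiff [Finite V] (hM : IsPerfectPairing M {v | Odd (degN G v)})
    (v : V) : Even (degN (fromEdgeSet (G.edgeSet ∆ M)) v) := by
  have h := degN_fromEdgeSet_symmDiff_add G hM.not_isDiag v
  rw [Nat.even_iff]
  by_cases hv : Odd (degN G v)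
  · rw [hM.ncard_setOf_mk_mem_of_mem hv] at h
    rw [Nat.odd_iff] at hv
    omega
  · rw [hM.ncard_setOf_mk_mem_of_notMem hv] at h
    rw [Nat.not_odd_iff_even, Nat.even_iff] at hv
    omega

theorem reachable_fromEdgeSet_symmDiff_of_adj {S : Set V} (hM : IsPerfectPairing M S)
    (hcn : ∀ u v : V, u ≠ v → ∃ z : V, z ≠ u ∧ z ≠ v ∧ G.Adj z u ∧ G.Adj z v) {a b : V}
    (hab : G.Adj a b) : (fromEdgeSet (G.edgeSet ∆ M)).Reachable a b := by
  have hadj {x y : V} (hxy : G.Adj x y) (hm : s(x, y) ∉ M) :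
      (fromEdgeSet (G.edgeSet ∆ M)).Adj x y :=
    (fromEdgeSet_adj _).mpr ⟨Or.inl ⟨hxy, hm⟩, hxy.ne⟩
  by_cases hm : s(a, b) ∈ M
  · obtain ⟨z, hza, hzb, hadj_za, hadj_zb⟩ := hcn a b hab.ne
    -- `a` and `b` are already paired with each other, hence not with `z`.
    have hz {x : V} (hx : x ∈ s(a, b)) : s(z, x) ∉ M := fun hzx => by
      have hz_mem := hM.eq_of_mem hzx hm (Sym2.mem_mk_right z x) hx ▸ Sym2.mem_mk_left z x
      rcases Sym2.mem_iff.mp hz_mem with rfl | rfl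
      exacts [hza rfl, hzb rfl]
    exact (hadj hadj_za (hz (Sym2.mem_mk_left a b))).symm.reachable.trans
      (hadj hadj_zb (hz (Sym2.mem_mk_right a b))).reachable
  · exact (hadj hab hm).reachable

theorem connected_fromEdgeSet_symmDiff {S : Set V} (hG : G.Connected)
    (hM : IsPerfectPairing M S)
    (hcn : ∀ u v : V, u ≠ v → ∃ z : V, z ≠ u ∧ z ≠ v ∧ G.Adj z u ∧ G.Adj z v) :
    (fromEdgeSet (G.edgeSet ∆ M)).Connected :=
  hG.of_adj_reachable fun _ _ hab => reachable_fromEdgeSet_symmDiff_of_adj G hM hcn hab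

end SimpleGraph

theorem edit_number_exact_general {V : Type*} [Fintype V] (G : SimpleGraph V)
    (hn : 3 ≤ Fintype.card V) (hconn : G.Connected)
    (hcn : ∀ u v : V, u ≠ v → ∃ z : V, z ≠ u ∧ z ≠ v ∧ G.Adj z u ∧ G.Adj z v)
    (M : Set (Sym2 V))
    (hM1 : ∀ e ∈ M, ¬ e.IsDiag)
    (hM2 : ∀ e ∈ M, ∀ v ∈ e, Odd (degN G v))
    (hM3 : ∀ v : V, Odd (degN G v) → ∃! e, e ∈ M ∧ v ∈ e) :
    IsEulerian (SimpleGraph.fromEdgeSet (symmDiff G.edgeSet M)) ∧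
      Nedit G = Nat.card {v : V // Odd (degN G v)} / 2 := by
  have hM : IsPerfectPairing M {v | Odd (degN G v)} := ⟨hM1, hM2, hM3⟩
  have : Nontrivial V := Fintype.one_lt_card_iff_nontrivial.mp (by omega)
  set H := fromEdgeSet (G.edgeSet ∆ M)
  have hH : H.Connected := connected_fromEdgeSet_symmDiff G hconn hM hcn
  have hEuler : IsEulerian H := ⟨hH, even_degN_fromEdgeSet_symmDiff G hM,
    edgeSet_nonempty.mpr fun hbot => not_connected_bot (hbot ▸ hH)⟩
  have hcard : Nat.card {v // Odd (degN G v)} = 2 * editCount G H := by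
    rw [editCount_fromEdgeSet_symmDiff G hM.not_isDiag, Nat.card_coe_set_eq]
    exact hM.ncard_eq_two_mul_ncard
  refine ⟨hEuler, le_antisymm (Nat.sInf_le ⟨H, hEuler, by omega⟩) ?_⟩
  refine le_csInf ⟨_, H, hEuler, rfl⟩ ?_
  rintro _ ⟨H', hH', rfl⟩
  have := card_odd_degN_le_two_mul_editCount (G := G) hH'.2.1
  omega

/-- For a connected graph on `n ≥ 3` vertices with `T ≥ 2` odd-degree vertices in
which every pair of vertices has a common neighbor, toggling the edge within each
pair of a perfect pairing `M` of the odd vertices yields an Eulerian graph, and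
hence `N_edit(G) = T/2`. -/
theorem edit_number_exact {V : Type*} [Fintype V] (G : SimpleGraph V)
    (hn : 3 ≤ Fintype.card V) (hconn : G.Connected)
    (hT : 2 ≤ Nat.card {v : V // Odd (degN G v)})
    (hcn : ∀ u v : V, u ≠ v → ∃ z : V, z ≠ u ∧ z ≠ v ∧ G.Adj z u ∧ G.Adj z v)
    (M : Set (Sym2 V))
    (hM1 : ∀ e ∈ M, ¬ e.IsDiag)
    (hM2 : ∀ e ∈ M, ∀ v ∈ e, Odd (degN G v))
    (hM3 : ∀ v : V, Odd (degN G v) → ∃! e, e ∈ M ∧ v ∈ e) :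
    IsEulerian (SimpleGraph.fromEdgeSet (symmDiff G.edgeSet M)) ∧
      Nedit G = Nat.card {v : V // Odd (degN G v)} / 2 :=
  edit_number_exact_general G hn hconn hcn M hM1 hM2 hM3
end
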